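/- Let C be a semidualizing (S,R)-bimodule. Then C is faithfully semidualizing (Hom_S(C,N)=0 implies N=0 for left S-modules N, and Hom_{R^op}(C,M)=0 implies M=0 for right R-modules M) if and only if: for every right S-module N, N ⊗_S C = 0 implies N = 0, and for every left R-module M, C ⊗_R M = 0 implies M = 0. -/

import Mathlib

open CategoryTheory MulOpposite

noncomputable section

universe u v w

section BTen

variable (S : Type w) [Ring S] (R : Type u) [Ring R]
variable (C : Type v) [AddCommGroup C] [Module S C] [Module Rᵐᵒᵖ C] [SMulCommClass S Rᵐᵒᵖ C]
variable (M : Type u) [AddCommGroup M] [Module R M]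

/-- The defining relations of the balanced tensor product `C ⊗_R M`. -/
def brel : Submodule S (TensorProduct ℤ C M) :=
  Submodule.span S {x | ∃ (c : C) (r : R) (m : M),
    x = (op r • c) ⊗ₜ[ℤ] m - c ⊗ₜ[ℤ] (r • m)}

/-- The balanced tensor product `C ⊗_R M` of a right `R`-module (with compatible
left `S`-action) and a left `R`-module, as a left `S`-module. -/
abbrev BTen := (TensorProduct ℤ C M) ⧸ brel S R C M

/-- `c ⊗ m` in `C ⊗_R M`. -/
def btmul (c : C) (m : M) : BTen S R C M := Submodule.Quotient.mk (c ⊗ₜ[ℤ] m)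

end BTen

section BMap

variable (S : Type w) [Ring S] (R : Type u) [Ring R]
variable (C : Type v) [AddCommGroup C] [Module S C] [Module Rᵐᵒᵖ C] [SMulCommClass S Rᵐᵒᵖ C]
variable {M M' M'' : Type u} [AddCommGroup M] [Module R M] [AddCommGroup M'] [Module R M']
  [AddCommGroup M''] [Module R M'']

/-- The `S`-linear lift of `1 ⊗ f` on the ambient `ℤ`-tensor products. -/
def bpre (f : M →ₗ[R] M') : TensorProduct ℤ C M →ₗ[S] TensorProduct ℤ C M' where
  toFun := LinearMap.lTensor C f.toAddMonoidHom.toIntLinearMap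
  map_add' x y := map_add _ x y
  map_smul' s x := by
    induction x using TensorProduct.induction_on with
    | zero => simp
    | tmul c m => simp [TensorProduct.smul_tmul']
    | add x y hx hy => simp_all [smul_add]

/-- The `S`-linear map `C ⊗_R M → C ⊗_R M'` induced by an `R`-linear map `f : M → M'`. -/
def bmap (f : M →ₗ[R] M') : BTen S R C M →ₗ[S] BTen S R C M' :=
  Submodule.mapQ _ _ (bpre S R C f) (by
    rw [brel, Submodule.span_le]
    rintro x ⟨c, r, m, rfl⟩
    simp only [SetLike.mem_coe, Submodule.mem_comap, map_sub]
    have h1 : bpre S R C f ((op r • c) ⊗ₜ[ℤ] m) = (op r • c) ⊗ₜ[ℤ] (f m) := by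
      simp [bpre]
    have h2 : bpre S R C f (c ⊗ₜ[ℤ] (r • m)) = c ⊗ₜ[ℤ] (r • f m) := by
      simp [bpre]
    rw [h1, h2]
    exact Submodule.subset_span ⟨c, r, f m, rfl⟩)

end BMap

set_option linter.unusedSectionVars false

section Lemmas

variable (S : Type w) [Ring S] (R : Type u) [Ring R]
variable (C : Type v) [AddCommGroup C] [Module S C] [Module Rᵐᵒᵖ C] [SMulCommClass S Rᵐᵒᵖ C]
variable {M M' M'' : Type u} [AddCommGroup M] [Module R M] [AddCommGroup M'] [Module R M']
  [AddCommGroup M''] [Module R M'']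

@[simp] lemma bmap_btmul (f : M →ₗ[R] M') (c : C) (m : M) :
    bmap S R C f (btmul S R C M c m) = btmul S R C M' c (f m) := by
  simp [bmap, btmul, bpre, Submodule.mapQ_apply]

lemma btmul_add (c : C) (m m' : M) :
    btmul S R C M c (m + m') = btmul S R C M c m + btmul S R C M c m' := by
  simp [btmul, TensorProduct.tmul_add, Submodule.Quotient.mk_add]

lemma btmul_smul (s : S) (c : C) (m : M) :
    btmul S R C M (s • c) m = s • btmul S R C M c m := by
  rw [btmul, btmul, ← Submodule.Quotient.mk_smul, TensorProduct.smul_tmul']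

lemma btmul_rel (r : R) (c : C) (m : M) :
    btmul S R C M (op r • c) m = btmul S R C M c (r • m) := by
  rw [btmul, btmul, Submodule.Quotient.eq]
  exact Submodule.subset_span ⟨c, r, m, rfl⟩

variable {T : Type u} [AddCommGroup T] [Module S T]

lemma bten_ext {g h : BTen S R C M →ₗ[S] T}
    (H : ∀ (c : C) (m : M), g (btmul S R C M c m) = h (btmul S R C M c m)) : g = h := by
  refine LinearMap.ext fun x => ?_
  obtain ⟨y, rfl⟩ := Submodule.Quotient.mk_surjective _ x
  induction y using TensorProduct.induction_on with
  | zero => simp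
  | tmul c m => exact H c m
  | add a b ha hb =>
      rw [Submodule.Quotient.mk_add, map_add, map_add, ha, hb]

end Lemmas

section TenF

variable (S : Type u) [Ring S] (R : Type u) [Ring R]
variable (C : Type u) [AddCommGroup C] [Module S C] [Module Rᵐᵒᵖ C] [SMulCommClass S Rᵐᵒᵖ C]

/-- The functor `C ⊗_R - : Mod(R) ⥤ Mod(S)`. -/
def tenF : ModuleCat.{u} R ⥤ ModuleCat.{u} S where
  obj M := ModuleCat.of S (BTen S R C M)
  map f := ModuleCat.ofHom (bmap S R C f.hom)
  map_id M := ModuleCat.hom_ext (bten_ext S R C (by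
    intro c m
    change bmap S R C (ModuleCat.Hom.hom (𝟙 M)) (btmul S R C _ c m) = btmul S R C _ c m
    rw [bmap_btmul]; rfl))
  map_comp f g := ModuleCat.hom_ext (bten_ext S R C (by
    intro c m
    change bmap S R C (ModuleCat.Hom.hom (f ≫ g)) (btmul S R C _ c m)
      = bmap S R C g.hom (bmap S R C f.hom (btmul S R C _ c m))
    rw [bmap_btmul, bmap_btmul, bmap_btmul]; rfl))

instance : (tenF S R C).Additive where
  map_add := by
    intro M N f g
    refine ModuleCat.hom_ext (bten_ext S R C fun c m => ?_)
    change bmap S R C (ModuleCat.Hom.hom (f + g)) (btmul S R C _ c m)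
      = bmap S R C f.hom (btmul S R C _ c m) + bmap S R C g.hom (btmul S R C _ c m)
    rw [bmap_btmul, bmap_btmul, bmap_btmul]
    change btmul S R C _ c (f.hom m + g.hom m) = _
    rw [btmul_add]

/-- `Tor^R_i(C, M)` as an object of `Mod(S)`, defined as the `i`-th left derived
functor of `C ⊗_R -` applied to `M`. -/
def TorC (M : Type u) [AddCommGroup M] [Module R M] (i : ℕ) : ModuleCat.{u} S :=
  ((tenF S R C).leftDerived i).obj (ModuleCat.of R M)

end TenF

section ExtPart

variable (S : Type u) [Ring S]

instance hasExtModuleCat : HasExt.{u+1} (ModuleCat.{u} S) :=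
  letI := HasDerivedCategory.standard (ModuleCat.{u} S)
  hasExt_of_hasDerivedCategory _

/-- `Ext^i_S(A, B)`. -/
def ExtGrp (A : Type u) [AddCommGroup A] [Module S A] (B : Type u) [AddCommGroup B] [Module S B]
    (i : ℕ) : Type (u+1) :=
  Abelian.Ext.{u+1} (ModuleCat.of S A) (ModuleCat.of S B) i

variable (A : Type u) [AddCommGroup A] [Module S A] (B : Type u) [AddCommGroup B] [Module S B]

instance (i : ℕ) : AddCommGroup (ExtGrp S A B i) :=
  inferInstanceAs (AddCommGroup (Abelian.Ext (ModuleCat.of S A) (ModuleCat.of S B) i))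

lemma mk₀_add' {X Y : ModuleCat.{u} S} (f g : X ⟶ Y) :
    Abelian.Ext.mk₀ (f + g) = Abelian.Ext.mk₀ f + Abelian.Ext.mk₀ g := by
  letI := HasDerivedCategory.standard (ModuleCat.{u} S)
  apply Abelian.Ext.ext
  rw [Abelian.Ext.add_hom, Abelian.Ext.mk₀_hom, Abelian.Ext.mk₀_hom, Abelian.Ext.mk₀_hom,
    Functor.map_add]
  simp [ShiftedHom.mk₀]

end ExtPart

section ExtModule

variable (S : Type u) [Ring S]
variable (A : Type u) [AddCommGroup A] [Module S A] (B : Type u) [AddCommGroup B] [Module S B]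
variable (T : Type u) [Ring T] [Module T B] [SMulCommClass S T B]

/-- The `S`-linear endomorphism of `B` given by the action of `t : T`. -/
def tsLin (t : T) : B →ₗ[S] B where
  toFun := fun b => t • b
  map_add' := smul_add t
  map_smul' := fun s b => (smul_comm s t b).symm

/-- `tsLin` as a morphism in `ModuleCat S`. -/
def tsMap (t : T) : ModuleCat.of S B ⟶ ModuleCat.of S B := ModuleCat.ofHom (tsLin S B T t)

/-- The `T`-module structure on `Ext^i_S(A,B)` induced by a commuting
`T`-action on `B`. -/
instance extModule (i : ℕ) : Module T (ExtGrp S A B i) where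
  smul t e := Abelian.Ext.comp e (Abelian.Ext.mk₀ (tsMap S B T t)) (add_zero i)
  one_smul e := by
    show Abelian.Ext.comp _ _ _ = _
    have h : tsMap S B T (1 : T) = 𝟙 (ModuleCat.of S B) := by
      apply ModuleCat.hom_ext
      show tsLin S B T 1 = (LinearMap.id : B →ₗ[S] B)
      ext b; simp [tsLin]
    rw [h]
    exact Abelian.Ext.comp_mk₀_id e
  mul_smul t₁ t₂ e := by
    show e.comp (Abelian.Ext.mk₀ (tsMap S B T (t₁ * t₂))) (add_zero i) =
      (e.comp (Abelian.Ext.mk₀ (tsMap S B T t₂)) (add_zero i)).comp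
        (Abelian.Ext.mk₀ (tsMap S B T t₁)) (add_zero i)
    change Abelian.Ext (ModuleCat.of S A) (ModuleCat.of S B) i at e
    rw [Abelian.Ext.comp_assoc_of_third_deg_zero, Abelian.Ext.mk₀_comp_mk₀]
    have h : tsMap S B T (t₁ * t₂) = tsMap S B T t₂ ≫ tsMap S B T t₁ := by
      apply ModuleCat.hom_ext
      show tsLin S B T (t₁ * t₂) = (tsLin S B T t₁).comp (tsLin S B T t₂)
      ext b; simp [tsLin, mul_smul]
    rw [h]
  smul_zero t := by
    show Abelian.Ext.comp _ _ _ = _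
    exact Abelian.Ext.zero_comp (X := ModuleCat.of S A) (Y := ModuleCat.of S B) (n := i) _ _ _
  smul_add t e₁ e₂ := by
    show Abelian.Ext.comp _ _ _ = _
    exact Abelian.Ext.add_comp _ _ _ _
  add_smul t₁ t₂ e := by
    show Abelian.Ext.comp _ _ _ = _
    have h : tsMap S B T (t₁ + t₂) = tsMap S B T t₁ + tsMap S B T t₂ := by
      apply ModuleCat.hom_ext
      show tsLin S B T (t₁ + t₂) = tsLin S B T t₁ + tsLin S B T t₂
      ext b; simp [tsLin, add_smul]
    exact (congrArg (fun x => Abelian.Ext.comp e x (add_zero i))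
      (show Abelian.Ext.mk₀ (tsMap S B T (t₁ + t₂))
        = Abelian.Ext.mk₀ (tsMap S B T t₁) + Abelian.Ext.mk₀ (tsMap S B T t₂) by
          rw [h, mk₀_add'])).trans (Abelian.Ext.comp_add _ _ _ _)
  zero_smul e := by
    show Abelian.Ext.comp _ _ _ = _
    have h : tsMap S B T (0 : T) = 0 := by
      apply ModuleCat.hom_ext
      show tsLin S B T (0 : T) = 0
      ext b; simp [tsLin]
    change Abelian.Ext (ModuleCat.of S A) (ModuleCat.of S B) i at e
    rw [h, Abelian.Ext.mk₀_zero, Abelian.Ext.comp_zero]; rfl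

end ExtModule

section HomC

variable (S : Type u) [Ring S] (R : Type u) [Ring R]
variable (C : Type u) [AddCommGroup C] [Module S C] [Module Rᵐᵒᵖ C] [SMulCommClass S Rᵐᵒᵖ C]
variable (N : Type u) [AddCommGroup N] [Module S N]

/-- Right multiplication by `r` on `C`, as an `S`-linear map. -/
def rsm (r : R) : C →ₗ[S] C where
  toFun := fun c => op r • c
  map_add' := smul_add (op r)
  map_smul' := fun s c => (smul_comm s (op r) c).symm

end HomC

/-- `Hom_S(C, N)` as a left `R`-module (the action comes from the right
`R`-module structure on `C`). -/
def HomC (S : Type u) [Ring S] (R : Type u) [Ring R]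
    (C : Type u) [AddCommGroup C] [Module S C] [Module Rᵐᵒᵖ C] [SMulCommClass S Rᵐᵒᵖ C]
    (N : Type u) [AddCommGroup N] [Module S N] : Type u := C →ₗ[S] N

section HomC2

variable (S : Type u) [Ring S] (R : Type u) [Ring R]
variable (C : Type u) [AddCommGroup C] [Module S C] [Module Rᵐᵒᵖ C] [SMulCommClass S Rᵐᵒᵖ C]
variable (N : Type u) [AddCommGroup N] [Module S N]

instance : AddCommGroup (HomC S R C N) := inferInstanceAs (AddCommGroup (C →ₗ[S] N))

instance : Module R (HomC S R C N) where
  smul r φ := (show C →ₗ[S] N from φ).comp (rsm S R C r)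
  one_smul φ := by
    show (show C →ₗ[S] N from φ).comp (rsm S R C 1) = φ
    ext c; simp [rsm]; rfl
  mul_smul r₁ r₂ φ := by
    show (show C →ₗ[S] N from φ).comp (rsm S R C (r₁ * r₂))
      = ((show C →ₗ[S] N from φ).comp (rsm S R C r₂)).comp (rsm S R C r₁)
    ext c
    show (show C →ₗ[S] N from φ) (op (r₁ * r₂) • c)
      = (show C →ₗ[S] N from φ) (op r₂ • op r₁ • c)
    rw [← mul_smul, ← MulOpposite.op_mul]
  smul_zero r := by
    show (0 : C →ₗ[S] N).comp (rsm S R C r) = 0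
    ext c; simp
  smul_add r φ ψ := by
    show ((show C →ₗ[S] N from φ) + (show C →ₗ[S] N from ψ)).comp (rsm S R C r)
      = (show C →ₗ[S] N from φ).comp (rsm S R C r)
        + (show C →ₗ[S] N from ψ).comp (rsm S R C r)
    ext c; simp; rfl
  add_smul r₁ r₂ φ := by
    show (show C →ₗ[S] N from φ).comp (rsm S R C (r₁ + r₂))
      = (show C →ₗ[S] N from φ).comp (rsm S R C r₁)
        + (show C →ₗ[S] N from φ).comp (rsm S R C r₂)
    ext c
    show (show C →ₗ[S] N from φ) (op (r₁ + r₂) • c)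
      = (show C →ₗ[S] N from φ) (op r₁ • c) + (show C →ₗ[S] N from φ) (op r₂ • c)
    rw [MulOpposite.op_add, add_smul, map_add]
  zero_smul φ := by
    show (show C →ₗ[S] N from φ).comp (rsm S R C 0) = 0
    ext c
    show (show C →ₗ[S] N from φ) (op (0 : R) • c) = 0
    simp; exact map_zero (show C →ₗ[S] N from φ)

/-- Application of an element of `HomC S R C N`. -/
def HomC.app (φ : HomC S R C N) : C →ₗ[S] N := φ

end HomC2

section MuNu

variable (S : Type u) [Ring S] (R : Type u) [Ring R]
variable (C : Type u) [AddCommGroup C] [Module S C] [Module Rᵐᵒᵖ C] [SMulCommClass S Rᵐᵒᵖ C]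

/-- `Hom_S(C, f)` for an `S`-linear map `f`, as an `R`-linear map. -/
def homCMap {N N' : Type u} [AddCommGroup N] [Module S N] [AddCommGroup N'] [Module S N']
    (f : N →ₗ[S] N') : HomC S R C N →ₗ[R] HomC S R C N' where
  toFun φ := (f.comp (show C →ₗ[S] N from φ) : C →ₗ[S] N')
  map_add' φ ψ := by
    apply LinearMap.ext; intro c
    show f ((show C →ₗ[S] N from φ) c + (show C →ₗ[S] N from ψ) c)
      = f ((show C →ₗ[S] N from φ) c) + f ((show C →ₗ[S] N from ψ) c)
    rw [map_add]
  map_smul' r φ := by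
    show f.comp ((show C →ₗ[S] N from φ).comp (rsm S R C r))
      = (f.comp (show C →ₗ[S] N from φ)).comp (rsm S R C r)
    ext c; simp; rfl

/-- The unit `μ_M : M → Hom_S(C, C ⊗_R M)` of the adjunction. -/
def muMap (M : Type u) [AddCommGroup M] [Module R M] :
    M →ₗ[R] HomC S R C (BTen S R C M) where
  toFun m := (show C →ₗ[S] BTen S R C M from
    { toFun := fun c => btmul S R C M c m
      map_add' := fun c c' => by
        show Submodule.Quotient.mk ((c + c') ⊗ₜ[ℤ] m) = (Submodule.Quotient.mk (c ⊗ₜ[ℤ] m))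
          + (Submodule.Quotient.mk (c' ⊗ₜ[ℤ] m))
        rw [TensorProduct.add_tmul, Submodule.Quotient.mk_add]
      map_smul' := fun s c => by simpa using btmul_smul S R C s c m })
  map_add' m m' := by
    apply LinearMap.ext; intro c
    exact btmul_add S R C c m m'
  map_smul' r m := by
    apply LinearMap.ext; intro c
    exact (btmul_rel S R C r c m).symm

/-- The counit `ν_N : C ⊗_R Hom_S(C,N) → N` of the adjunction. -/
def nuMap (N : Type u) [AddCommGroup N] [Module S N] :
    BTen S R C (HomC S R C N) →ₗ[S] N := by
  refine Submodule.liftQ _ ?_ ?_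
  · exact
    { toFun := TensorProduct.lift (σ₁₂ := RingHom.id ℤ) (N := HomC S R C N) (P₂ := N)
        { toFun := fun c =>
            { toFun := fun φ => (show C →ₗ[S] N from φ) c
              map_add' := fun φ ψ => rfl
              map_smul' := fun n φ => by
                show (show C →ₗ[S] N from n • φ) c = n • (show C →ₗ[S] N from φ) c
                simp; rfl }
          map_add' := fun c c' => by
            ext φ; exact map_add (show C →ₗ[S] N from φ) c c'
          map_smul' := fun n c => by
            ext φ; exact map_zsmul (show C →ₗ[S] N from φ) n c }
      map_add' := fun x y => map_add _ x y
      map_smul' := fun s x => by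
        induction x using TensorProduct.induction_on with
        | zero => simp
        | tmul c φ => simp [TensorProduct.smul_tmul']; exact (show C →ₗ[S] N from φ).map_smul s c
        | add x y hx hy => simp_all [smul_add] }
  · rw [brel, Submodule.span_le]
    rintro x ⟨c, r, φ, rfl⟩
    simp only [SetLike.mem_coe, LinearMap.mem_ker, map_sub, LinearMap.coe_mk, AddHom.coe_mk]
    show TensorProduct.lift _ ((op r • c) ⊗ₜ[ℤ] φ) - TensorProduct.lift _ (c ⊗ₜ[ℤ] (r • φ)) = 0
    rw [TensorProduct.lift.tmul, TensorProduct.lift.tmul]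
    show (show C →ₗ[S] N from φ) (op r • c)
      - ((show C →ₗ[S] N from φ).comp (rsm S R C r)) c = 0
    simp [rsm]; exact sub_self _

end MuNu

section BMapL

variable (R : Type u) [Ring R]
variable {A B : Type u} [AddCommGroup A] [Module Rᵐᵒᵖ A] [AddCommGroup B] [Module Rᵐᵒᵖ B]
variable (M : Type u) [AddCommGroup M] [Module R M]

/-- The additive map `A ⊗_R M → B ⊗_R M` induced by a right `R`-linear map `g : A → B`. -/
def bmapL (g : A →ₗ[Rᵐᵒᵖ] B) : BTen ℤ R A M →ₗ[ℤ] BTen ℤ R B M :=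
  Submodule.mapQ _ _ (LinearMap.rTensor M g.toAddMonoidHom.toIntLinearMap) (by
    rw [brel, Submodule.span_le]
    rintro x ⟨a, r, m, rfl⟩
    simp only [SetLike.mem_coe, Submodule.mem_comap, map_sub]
    have h1 : LinearMap.rTensor M g.toAddMonoidHom.toIntLinearMap ((op r • a) ⊗ₜ[ℤ] m)
        = (op r • g a) ⊗ₜ[ℤ] m := by
      simp
    have h2 : LinearMap.rTensor M g.toAddMonoidHom.toIntLinearMap (a ⊗ₜ[ℤ] (r • m))
        = g a ⊗ₜ[ℤ] (r • m) := by
      simp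
    rw [h1, h2]
    exact Submodule.subset_span ⟨g a, r, m, rfl⟩)

end BMapL

section FlatDef

variable (R : Type u) [Ring R]

/-- A left `R`-module `F` is flat if `- ⊗_R F` preserves injectivity of maps of
right `R`-modules. -/
def FlatModule (F : Type u) [AddCommGroup F] [Module R F] : Prop :=
  ∀ (A B : ModuleCat.{u} Rᵐᵒᵖ) (g : A →ₗ[Rᵐᵒᵖ] B), Function.Injective g →
    Function.Injective (bmapL R F g)

end FlatDef

section Classes

variable (S : Type u) [Ring S] (R : Type u) [Ring R]
variable (C : Type u) [AddCommGroup C] [Module S C] [Module Rᵐᵒᵖ C] [SMulCommClass S Rᵐᵒᵖ C]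

/-- `A` admits a degreewise finite projective resolution over `S`. -/
def HasDegreewiseFiniteProjectiveResolution (A : Type u) [AddCommGroup A] [Module S A] : Prop :=
  ∃ P : CategoryTheory.ProjectiveResolution (ModuleCat.of S A),
    ∀ n, Module.Finite S (P.complex.X n)

/-- `C` is a semidualizing `(S,R)`-bimodule. -/
def IsSemidualizing : Prop :=
  HasDegreewiseFiniteProjectiveResolution S C ∧
  HasDegreewiseFiniteProjectiveResolution Rᵐᵒᵖ C ∧
  Function.Bijective (fun s : S =>
    ({ toFun := fun c : C => s • c
       map_add' := smul_add s
       map_smul' := fun r c => smul_comm s r c } : C →ₗ[Rᵐᵒᵖ] C)) ∧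
  Function.Bijective (rsm S R C : R → (C →ₗ[S] C)) ∧
  (∀ i : ℕ, 1 ≤ i → Subsingleton (ExtGrp S C C i)) ∧
  (∀ i : ℕ, 1 ≤ i → Subsingleton (ExtGrp Rᵐᵒᵖ C C i))

/-- `C` is a faithfully semidualizing `(S,R)`-bimodule. -/
def IsFaithfullySemidualizing : Prop :=
  IsSemidualizing S R C ∧
  (∀ N : ModuleCat.{u} S, (∀ φ : C →ₗ[S] N, φ = 0) → Subsingleton N) ∧
  (∀ M : ModuleCat.{u} Rᵐᵒᵖ, (∀ φ : C →ₗ[Rᵐᵒᵖ] M, φ = 0) → Subsingleton M)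

/-- Membership in the Auslander class `A_C(R)`. -/
def MemAuslander (M : Type u) [AddCommGroup M] [Module R M] : Prop :=
  (∀ i : ℕ, 1 ≤ i → Subsingleton (TorC S R C M i)) ∧
  (∀ i : ℕ, 1 ≤ i → Subsingleton (ExtGrp S C (BTen S R C M) i)) ∧
  Function.Bijective (muMap S R C M)

/-- Membership in the Bass class `B_C(S)`. -/
def MemBass (N : Type u) [AddCommGroup N] [Module S N] : Prop :=
  (∀ i : ℕ, 1 ≤ i → Subsingleton (ExtGrp S C N i)) ∧
  (∀ i : ℕ, 1 ≤ i → Subsingleton (TorC S R C (HomC S R C N) i)) ∧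
  Function.Bijective (nuMap S R C N)

/-- `V` is a `C`-flat `S`-module, i.e. `V ≅ C ⊗_R F` with `F` a flat `R`-module. -/
def IsCFlat (V : Type u) [AddCommGroup V] [Module S V] : Prop :=
  ∃ F : ModuleCat.{u} R, FlatModule R F ∧ Nonempty (V ≃ₗ[S] BTen S R C F)

/-- `V` is a `C`-projective `S`-module. -/
def IsCProjective (V : Type u) [AddCommGroup V] [Module S V] : Prop :=
  ∃ P : ModuleCat.{u} R, Module.Projective R P ∧ Nonempty (V ≃ₗ[S] BTen S R C P)

/-- `U` is a `C`-injective `R`-module, i.e. `U ≅ Hom_S(C, I)` with `I` an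
injective `S`-module. -/
def IsCInjective (U : Type u) [AddCommGroup U] [Module R U] : Prop :=
  ∃ I : ModuleCat.{u} S, Module.Injective S I ∧ Nonempty (U ≃ₗ[R] HomC S R C I)

end Classes


/-! ### Auxiliary material for the proof -/

section CharInstances

universe uX

variable (T : Type) [Ring T] (X : Type uX) [AddCommGroup X]

/-- Right `T`-action on characters of a left `T`-module. -/
instance charModRight [Module T X] : Module Tᵐᵒᵖ (CharacterModule X) where
  smul t f := (f : X →+ _).comp (DistribMulAction.toAddMonoidHom X t.unop)
  one_smul f := by ext x; show f ((1 : T) • x) = f x; rw [one_smul]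
  mul_smul t t' f := by
    ext x
    show f (((t * t').unop : T) • x) = f (t'.unop • t.unop • x)
    rw [MulOpposite.unop_mul, mul_smul]
  smul_zero t := rfl
  smul_add t f g := rfl
  add_smul t t' f := by
    ext x
    show f (((t + t').unop : T) • x) = f (t.unop • x) + f (t'.unop • x)
    rw [MulOpposite.unop_add, add_smul, map_add]
  zero_smul f := by
    ext x
    show f (((0 : Tᵐᵒᵖ).unop : T) • x) = 0
    rw [MulOpposite.unop_zero, zero_smul, map_zero]

/-- Left `T`-action on characters of a right `T`-module. -/
instance charModLeft [Module Tᵐᵒᵖ X] : Module T (CharacterModule X) where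
  smul t f := (f : X →+ _).comp (DistribMulAction.toAddMonoidHom X (op t))
  one_smul f := by ext x; show f ((op (1 : T)) • x) = f x; rw [op_one, one_smul]
  mul_smul t t' f := by
    ext x
    show f (op (t * t') • x) = f (op t' • op t • x)
    rw [MulOpposite.op_mul, mul_smul]
  smul_zero t := rfl
  smul_add t f g := rfl
  add_smul t t' f := by
    ext x
    show f (op (t + t') • x) = f (op t • x) + f (op t' • x)
    rw [MulOpposite.op_add, add_smul, map_add]
  zero_smul f := by
    ext x
    show f (op (0 : T) • x) = 0
    rw [MulOpposite.op_zero, zero_smul, map_zero]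

lemma charModRight_smul_apply [Module T X] (t : T) (f : CharacterModule X) (x : X) :
    (op t • f) x = f (t • x) := rfl

lemma charModLeft_smul_apply [Module Tᵐᵒᵖ X] (t : T) (f : CharacterModule X) (x : X) :
    (t • f) x = f (op t • x) := rfl

lemma char_add_apply (f g : CharacterModule X) (x : X) : (f + g) x = f x + g x := rfl

lemma char_zero_apply (x : X) : (0 : CharacterModule X) x = 0 := rfl

lemma char_sum_apply {ι : Type} (s : Finset ι) (F : ι → CharacterModule X) (x : X) :
    (∑ t ∈ s, F t) x = ∑ t ∈ s, F t x := by
  classical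
  refine Finset.induction_on s (by rw [Finset.sum_empty, Finset.sum_empty]; rfl) ?_
  intro a s ha ih
  rw [Finset.sum_insert ha, Finset.sum_insert ha, char_add_apply, ih]

/-- Evaluation at a point as an additive map on characters. -/
def charEv (x : X) : CharacterModule X →+ AddCircle (1 : ℚ) where
  toFun f := f x
  map_zero' := rfl
  map_add' _ _ := rfl

lemma char_zsmul_apply (z : ℤ) (f : CharacterModule X) (x : X) :
    (z • f) x = z • f x := map_zsmul (charEv X x) z f

lemma subsingleton_of_char (h : Subsingleton (CharacterModule X)) : Subsingleton X := by
  have hz : ∀ a : X, a = 0 := by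
    intro a
    refine CharacterModule.eq_zero_of_character_apply (fun c => ?_)
    rw [Subsingleton.elim c 0]; rfl
  exact ⟨fun a b => by rw [hz a, hz b]⟩

lemma subsingleton_of_ulift {Y : Type uX} (h : Subsingleton (ULift.{u} Y)) :
    Subsingleton Y :=
  ⟨fun a b => congrArg ULift.down (Subsingleton.elim (ULift.up a) (ULift.up b))⟩

end CharInstances

section FP

variable (S : Type) [Ring S]

lemma exists_fp (C : Type) [AddCommGroup C] [Module S C]
    (h : HasDegreewiseFiniteProjectiveResolution S C) :
    ∃ (k m : ℕ) (p : (Fin k → S) →ₗ[S] C) (κ : Fin m → (Fin k → S)),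
      Function.Surjective p ∧ LinearMap.ker p = Submodule.span S (Set.range κ) := by
  obtain ⟨P, hfin⟩ := h
  -- the short complex X1 → X0 → C
  set SC : ShortComplex (ModuleCat S) :=
    ShortComplex.mk (P.complex.d 1 0) (P.π.f 0) P.complex_d_comp_π_f_zero with hSC
  have hex : SC.Exact := SC.exact_of_g_is_cokernel P.isColimitCokernelCofork
  have hepi : Epi SC.g := Limits.epi_of_isColimit_cofork P.isColimitCokernelCofork
  have hrange : LinearMap.range SC.f.hom = LinearMap.ker SC.g.hom :=
    (ShortComplex.moduleCat_exact_iff_range_eq_ker SC).1 hex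
  have hsurj : Function.Surjective SC.g.hom := (ModuleCat.epi_iff_surjective SC.g).1 hepi
  -- view `SC.g` as a linear map to `C`
  let f0 : ↥(P.complex.X 0) →ₗ[S] C := SC.g.hom
  have hf0surj : Function.Surjective f0 := hsurj
  have hkerf0 : LinearMap.ker f0 = LinearMap.range SC.f.hom := hrange.symm
  haveI : Module.Finite S ↥(P.complex.X 1) := hfin 1
  haveI : Module.Finite S ↥(P.complex.X 0) := hfin 0
  have hkfg : (LinearMap.ker f0).FG := by
    rw [hkerf0, LinearMap.range_eq_map]
    exact Submodule.FG.map _ (Module.finite_def.1 (hfin 1))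
  obtain ⟨k, π0, hπ0⟩ := Module.Finite.exists_fin' S ↥(P.complex.X 0)
  have hepi0 : Epi (ModuleCat.ofHom π0 : ModuleCat.of S (Fin k → S) ⟶ P.complex.X 0) :=
    (ModuleCat.epi_iff_surjective _).2 hπ0
  haveI : Projective (P.complex.X 0) := P.projective 0
  let σ : P.complex.X 0 ⟶ ModuleCat.of S (Fin k → S) :=
    Projective.factorThru (𝟙 (P.complex.X 0)) (ModuleCat.ofHom π0)
  let σl : ↥(P.complex.X 0) →ₗ[S] (Fin k → S) := σ.hom
  have hσ : ∀ x, π0 (σl x) = x := by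
    intro x
    have := Projective.factorThru_comp (𝟙 (P.complex.X 0)) (ModuleCat.ofHom π0)
    exact congrFun (congrArg (fun (f : P.complex.X 0 ⟶ P.complex.X 0) => (f.hom : _ → _)) this) x
  let p : (Fin k → S) →ₗ[S] C := f0 ∘ₗ π0
  have hpsurj : Function.Surjective p := hf0surj.comp hπ0
  have hkerπ0 : LinearMap.ker π0 = LinearMap.range (LinearMap.id - σl ∘ₗ π0) := by
    apply le_antisymm
    · intro x hx
      refine ⟨x, ?_⟩
      simp only [LinearMap.sub_apply, LinearMap.id_apply, LinearMap.coe_comp,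
        Function.comp_apply]
      rw [LinearMap.mem_ker.1 hx, map_zero, sub_zero]
    · rintro _ ⟨x, rfl⟩
      simp only [LinearMap.mem_ker, LinearMap.sub_apply, LinearMap.id_apply,
        LinearMap.coe_comp, Function.comp_apply, map_sub]
      rw [hσ (π0 x), sub_self]
  have hkπ0fg : (LinearMap.ker π0).FG := by
    rw [hkerπ0, LinearMap.range_eq_map]
    exact Submodule.FG.map _ (Module.finite_def.1 inferInstance)
  have hkerp : LinearMap.ker p = LinearMap.ker π0 ⊔ Submodule.map σl (LinearMap.ker f0) := by
    apply le_antisymm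
    · intro x hx
      have hx' : f0 (π0 x) = 0 := hx
      have h1 : x - σl (π0 x) ∈ LinearMap.ker π0 := by
        simp only [LinearMap.mem_ker, map_sub]
        rw [hσ (π0 x), sub_self]
      have h2 : σl (π0 x) ∈ Submodule.map σl (LinearMap.ker f0) :=
        ⟨π0 x, hx', rfl⟩
      have : x = (x - σl (π0 x)) + σl (π0 x) := by abel
      rw [this]
      exact Submodule.add_mem _ (Submodule.mem_sup_left h1) (Submodule.mem_sup_right h2)
    · rw [sup_le_iff]
      constructor
      · intro x hx
        show f0 (π0 x) = 0
        rw [LinearMap.mem_ker.1 hx, map_zero]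
      · rintro _ ⟨y, hy, rfl⟩
        show f0 (π0 (σl y)) = 0
        rw [hσ y]
        exact hy
  have hkpfg : (LinearMap.ker p).FG := by
    rw [hkerp]
    exact Submodule.FG.sup hkπ0fg (Submodule.FG.map _ hkfg)
  obtain ⟨m, κ, hκ⟩ := Submodule.fg_iff_exists_fin_generating_family.1 hkpfg
  exact ⟨k, m, p, κ, hpsurj, hκ.symm⟩

end FP

section BtHoms

universe ub vb

variable (S : Type) [Ring S] (R : Type) [Ring R]
variable (C : Type vb) [AddCommGroup C] [Module S C] [Module Rᵐᵒᵖ C] [SMulCommClass S Rᵐᵒᵖ C]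
variable (M : Type) [AddCommGroup M] [Module R M]

/-- `btmul` as an additive map in the first variable. -/
def btL (m : M) : C →+ BTen S R C M where
  toFun c := btmul S R C M c m
  map_zero' := by
    show Submodule.Quotient.mk ((0 : C) ⊗ₜ[ℤ] m) = 0
    rw [TensorProduct.zero_tmul]
    rfl
  map_add' c c' := by
    show Submodule.Quotient.mk ((c + c') ⊗ₜ[ℤ] m) = _
    rw [TensorProduct.add_tmul]
    rfl

/-- `btmul` as an additive map in the second variable. -/
def btR (c : C) : M →+ BTen S R C M where
  toFun m := btmul S R C M c m
  map_zero' := by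
    show Submodule.Quotient.mk (c ⊗ₜ[ℤ] (0 : M)) = 0
    rw [TensorProduct.tmul_zero]
    rfl
  map_add' m m' := btmul_add S R C c m m'

end BtHoms

section Forward

universe u1 u2 u3

variable (S : Type) [Ring S] (R : Type) [Ring R]
variable (C : Type) [AddCommGroup C] [Module S C] [Module Rᵐᵒᵖ C] [SMulCommClass S Rᵐᵒᵖ C]

lemma key1 (N : Type u3) [AddCommGroup N] [Module Sᵐᵒᵖ N]
    (hsub : Subsingleton (BTen ℤ S N C)) (ψ : C →ₗ[S] CharacterModule N) : ψ = 0 := by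
  refine LinearMap.ext fun c => DFunLike.ext _ _ fun n => ?_
  rw [LinearMap.zero_apply, char_zero_apply]
  let F : N →+ C →+ AddCircle (1 : ℚ) :=
    { toFun := fun n =>
        { toFun := fun c => ψ c n
          map_zero' := by show ψ (0 : C) n = 0; rw [map_zero]; rfl
          map_add' := fun c c' => by
            show ψ (c + c') n = ψ c n + ψ c' n
            rw [map_add]; rfl }
      map_zero' := by ext c; show ψ c (0 : N) = 0; exact map_zero (ψ c)
      map_add' := fun n n' => by
        ext c
        show ψ c (n + n') = ψ c n + ψ c n'
        exact map_add (ψ c) n n' }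
  have hF : ∀ (z : ℤ) (n : N) (c : C), F (z • n) c = F n (z • c) := by
    intro z n c
    show ψ c (z • n) = ψ (z • c) n
    rw [map_zsmul (ψ c) z n, map_zsmul ψ z c, char_zsmul_apply]
  let e : TensorProduct ℤ N C →+ AddCircle (1 : ℚ) := TensorProduct.liftAddHom F hF
  have he : ∀ z ∈ brel ℤ S N C, e z = 0 := by
    intro z hz
    rw [brel] at hz
    refine Submodule.span_induction (p := fun z _ => e z = 0) ?_ (map_zero e) ?_ ?_ hz
    · rintro x ⟨n', s, c', rfl⟩
      rw [map_sub, TensorProduct.liftAddHom_tmul, TensorProduct.liftAddHom_tmul]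
      show ψ c' (op s • n') - ψ (s • c') n' = 0
      rw [map_smul ψ s c', charModLeft_smul_apply, sub_self]
    · intro x y _ _ hx hy
      rw [map_add, hx, hy, add_zero]
    · intro z x _ hx
      rw [map_zsmul e, hx, smul_zero]
  have h0 : btmul ℤ S N C n c = 0 := Subsingleton.elim _ _
  have hmem : (n ⊗ₜ[ℤ] c : TensorProduct ℤ N C) ∈ brel ℤ S N C := by
    rwa [btmul, Submodule.Quotient.mk_eq_zero] at h0
  have := he _ hmem
  rwa [TensorProduct.liftAddHom_tmul] at this

lemma key2 (M : Type) [AddCommGroup M] [Module R M]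
    (hsub : Subsingleton (BTen S R C M)) (ψ : C →ₗ[Rᵐᵒᵖ] CharacterModule M) : ψ = 0 := by
  refine LinearMap.ext fun c => DFunLike.ext _ _ fun m => ?_
  rw [LinearMap.zero_apply, char_zero_apply]
  let F : C →+ M →+ AddCircle (1 : ℚ) :=
    { toFun := fun c =>
        { toFun := fun m => ψ c m
          map_zero' := map_zero (ψ c)
          map_add' := fun m m' => map_add (ψ c) m m' }
      map_zero' := by ext m; show ψ (0 : C) m = 0; rw [map_zero]; rfl
      map_add' := fun c c' => by
        ext m
        show ψ (c + c') m = ψ c m + ψ c' m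
        rw [map_add]; rfl }
  have hF : ∀ (z : ℤ) (c : C) (m : M), F (z • c) m = F c (z • m) := by
    intro z c m
    show ψ (z • c) m = ψ c (z • m)
    rw [map_zsmul ψ z c, map_zsmul (ψ c) z m, char_zsmul_apply]
  let e : TensorProduct ℤ C M →+ AddCircle (1 : ℚ) := TensorProduct.liftAddHom F hF
  have he : ∀ z ∈ brel S R C M, e z = 0 := by
    intro z hz
    rw [brel] at hz
    have key : ∀ (z : TensorProduct ℤ C M), (∀ s : S, e (s • z) = 0) → e z = 0 := by
      intro z h
      simpa using h 1
    refine key z (Submodule.span_induction (p := fun z _ => ∀ s : S, e (s • z) = 0)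
      ?_ ?_ ?_ ?_ hz)
    · rintro x ⟨c', r, m', rfl⟩ s
      rw [smul_sub, TensorProduct.smul_tmul', TensorProduct.smul_tmul', map_sub,
        TensorProduct.liftAddHom_tmul, TensorProduct.liftAddHom_tmul]
      show ψ (s • op r • c') m' - ψ (s • c') (r • m') = 0
      rw [smul_comm s (op r), map_smul ψ (op r) (s • c'), charModRight_smul_apply, sub_self]
    · intro s
      rw [smul_zero, map_zero]
    · intro x y _ _ hx hy s
      rw [smul_add, map_add, hx s, hy s, add_zero]
    · intro a x _ hx s
      rw [smul_smul, hx (s * a)]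
  have h0 : btmul S R C M c m = 0 := Subsingleton.elim _ _
  have hmem : (c ⊗ₜ[ℤ] m : TensorProduct ℤ C M) ∈ brel S R C M := by
    rwa [btmul, Submodule.Quotient.mk_eq_zero] at h0
  have := he _ hmem
  rwa [TensorProduct.liftAddHom_tmul] at this

lemma forward1
    (hHom : ∀ N' : ModuleCat.{u1} S, (∀ φ : C →ₗ[S] N', φ = 0) → Subsingleton N')
    (N : Type u3) [AddCommGroup N] [Module Sᵐᵒᵖ N]
    (hsub : Subsingleton (BTen ℤ S N C)) : Subsingleton N := by
  have hz : ∀ f : CharacterModule N, f = 0 := by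
    intro f
    let ρ : S →ₗ[S] CharacterModule N :=
      { toFun := fun s => s • f
        map_add' := fun s s' => add_smul s s' f
        map_smul' := fun s s' => mul_smul s s' f }
    let W := S ⧸ LinearMap.ker ρ
    let ι : W →ₗ[S] CharacterModule N := (LinearMap.ker ρ).liftQ ρ le_rfl
    have hι : Function.Injective ι := by
      rw [← LinearMap.ker_eq_bot]
      exact Submodule.ker_liftQ_eq_bot _ _ _ le_rfl
    let uEq : ULift.{u1} W ≃ₗ[S] W := ULift.moduleEquiv
    have hsubW : Subsingleton (ULift.{u1} W) := by
      refine hHom (ModuleCat.of S (ULift.{u1} W)) ?_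
      intro φ
      have hcomp : ι ∘ₗ (uEq : ULift.{u1} W →ₗ[S] W) ∘ₗ φ = 0 := key1 S C N hsub _
      refine LinearMap.ext fun c => ?_
      have h1 : ι (uEq (φ c)) = (0 : C →ₗ[S] CharacterModule N) c :=
        DFunLike.congr_fun hcomp c
      rw [LinearMap.zero_apply] at h1
      have h2 : (uEq (φ c) : W) = 0 := by
        apply hι
        rw [h1, map_zero]
      show φ c = (0 : C →ₗ[S] ULift.{u1} W) c
      rw [LinearMap.zero_apply]
      exact uEq.injective (by rw [h2, map_zero])
    haveI : Subsingleton W := subsingleton_of_ulift hsubW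
    have h1 : (Submodule.Quotient.mk (1 : S) : W) = 0 := Subsingleton.elim _ _
    have h2 : (1 : S) ∈ LinearMap.ker ρ := (Submodule.Quotient.mk_eq_zero _).1 h1
    have h3 : ρ 1 = 0 := h2
    rwa [show ρ 1 = f from one_smul S f] at h3
  exact subsingleton_of_char _ ⟨fun a b => by rw [hz a, hz b]⟩

lemma forward2
    (hHom : ∀ M' : ModuleCat.{u2} Rᵐᵒᵖ, (∀ φ : C →ₗ[Rᵐᵒᵖ] M', φ = 0) → Subsingleton M')
    (M : Type) [AddCommGroup M] [Module R M]
    (hsub : Subsingleton (BTen S R C M)) : Subsingleton M := by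
  have hz : ∀ f : CharacterModule M, f = 0 := by
    intro f
    let ρ : Rᵐᵒᵖ →ₗ[Rᵐᵒᵖ] CharacterModule M :=
      { toFun := fun t => t • f
        map_add' := fun t t' => add_smul t t' f
        map_smul' := fun t t' => mul_smul t t' f }
    let W := Rᵐᵒᵖ ⧸ LinearMap.ker ρ
    let ι : W →ₗ[Rᵐᵒᵖ] CharacterModule M := (LinearMap.ker ρ).liftQ ρ le_rfl
    have hι : Function.Injective ι := by
      rw [← LinearMap.ker_eq_bot]
      exact Submodule.ker_liftQ_eq_bot _ _ _ le_rfl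
    let uEq : ULift.{u2} W ≃ₗ[Rᵐᵒᵖ] W := ULift.moduleEquiv
    have hsubW : Subsingleton (ULift.{u2} W) := by
      refine hHom (ModuleCat.of Rᵐᵒᵖ (ULift.{u2} W)) ?_
      intro φ
      have hcomp : ι ∘ₗ (uEq : ULift.{u2} W →ₗ[Rᵐᵒᵖ] W) ∘ₗ φ = 0 := key2 S R C M hsub _
      refine LinearMap.ext fun c => ?_
      have h1 : ι (uEq (φ c)) = (0 : C →ₗ[Rᵐᵒᵖ] CharacterModule M) c :=
        DFunLike.congr_fun hcomp c
      rw [LinearMap.zero_apply] at h1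
      have h2 : (uEq (φ c) : W) = 0 := by
        apply hι
        rw [h1, map_zero]
      show φ c = (0 : C →ₗ[Rᵐᵒᵖ] ULift.{u2} W) c
      rw [LinearMap.zero_apply]
      exact uEq.injective (by rw [h2, map_zero])
    haveI : Subsingleton W := subsingleton_of_ulift hsubW
    have h1 : (Submodule.Quotient.mk (1 : Rᵐᵒᵖ) : W) = 0 := Subsingleton.elim _ _
    have h2 : (1 : Rᵐᵒᵖ) ∈ LinearMap.ker ρ := (Submodule.Quotient.mk_eq_zero _).1 h1
    have h3 : ρ 1 = 0 := h2
    rwa [show ρ 1 = f from one_smul Rᵐᵒᵖ f] at h3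
  exact subsingleton_of_char _ ⟨fun a b => by rw [hz a, hz b]⟩

end Forward

section CoreS

universe uV

variable (S : Type) [Ring S]
variable (C : Type) [AddCommGroup C] [Module S C]

/-- The key step: if `C` is finitely presented over `S` and `Hom_S(C, N₀) = 0`, then
`N₀⁺ ⊗_S C = 0`, where `N₀⁺` is (any module isomorphic to) the character module of `N₀`,
viewed as a right `S`-module. -/
lemma coreS
    (hfp : ∃ (k m : ℕ) (p : (Fin k → S) →ₗ[S] C) (κ : Fin m → (Fin k → S)),
      Function.Surjective p ∧ LinearMap.ker p = Submodule.span S (Set.range κ))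
    (N₀ : Type) [AddCommGroup N₀] [Module S N₀]
    (hHom : ∀ φ : C →ₗ[S] N₀, φ = 0)
    (V : Type uV) [AddCommGroup V] [Module Sᵐᵒᵖ V]
    (e : V ≃ₗ[Sᵐᵒᵖ] CharacterModule N₀) :
    Subsingleton (BTen ℤ S V C) := by
  obtain ⟨k, m, p, κ, hp, hker⟩ := hfp
  set γ : Fin k → C := fun j => p (Pi.single j 1) with hγ
  have hsingle : ∀ (j : Fin k) (s : S),
      (Pi.single j s : Fin k → S) = s • (Pi.single j (1 : S) : Fin k → S) := by
    intro j s
    ext i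
    rcases eq_or_ne i j with rfl | h
    · simp
    · simp [Pi.single_apply, h]
  have hpv : ∀ v : Fin k → S, p v = ∑ j, v j • γ j := by
    intro v
    conv_lhs => rw [← Finset.univ_sum_single v, map_sum]
    refine Finset.sum_congr rfl fun j _ => ?_
    rw [hsingle j (v j), map_smul]
  have hκ0 : ∀ t, p (κ t) = 0 := by
    intro t
    have : κ t ∈ LinearMap.ker p := by
      rw [hker]
      exact Submodule.subset_span ⟨t, rfl⟩
    exact this
  -- Step B
  have hB : ∀ g : Fin k → V, (∑ j, btmul ℤ S V C (g j) (γ j)) = 0 := by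
    intro g
    let γadd : (Fin k → N₀) →+ (Fin m → N₀) :=
      { toFun := fun x t => ∑ j, κ t j • x j
        map_zero' := by funext t; simp
        map_add' := fun x y => by
          funext t
          simp [Pi.add_apply, smul_add, Finset.sum_add_distrib] }
    let γlin : (Fin k → N₀) →ₗ[ℤ] (Fin m → N₀) := γadd.toIntLinearMap
    have hγlin : ∀ (x : Fin k → N₀) (t : Fin m), γlin x t = ∑ j, κ t j • x j :=
      fun x t => rfl
    have hinj : Function.Injective γlin := by
      suffices h : ∀ x, γlin x = 0 → x = 0 by
        intro x y hxy
        have := h (x - y) (by rw [map_sub, hxy, sub_self])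
        rwa [sub_eq_zero] at this
      intro x hx
      let ψ : (Fin k → S) →ₗ[S] N₀ :=
        { toFun := fun v => ∑ j, v j • x j
          map_add' := fun v w => by simp [Pi.add_apply, add_smul, Finset.sum_add_distrib]
          map_smul' := fun s v => by
            simp [Pi.smul_apply, smul_eq_mul, mul_smul, Finset.smul_sum] }
      have hκψ : ∀ t, ψ (κ t) = 0 := by
        intro t
        have h1 : γlin x t = 0 := by rw [hx]; rfl
        rw [hγlin] at h1
        exact h1
      have hle : LinearMap.ker p ≤ LinearMap.ker ψ := by
        rw [hker, Submodule.span_le]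
        rintro _ ⟨t, rfl⟩
        exact hκψ t
      let eqv := p.quotKerEquivOfSurjective hp
      let φ : C →ₗ[S] N₀ := ((LinearMap.ker p).liftQ ψ hle) ∘ₗ (eqv.symm : C →ₗ[S] _)
      have hφp : ∀ v, φ (p v) = ψ v := by
        intro v
        have h1 : eqv.symm (p v) = Submodule.Quotient.mk v := by
          apply eqv.injective
          rw [LinearEquiv.apply_symm_apply]
          rfl
        show ((LinearMap.ker p).liftQ ψ hle) (eqv.symm (p v)) = ψ v
        rw [h1, Submodule.liftQ_apply]
      have hφ0 : φ = 0 := hHom φ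
      funext j
      have h2 : ψ (Pi.single j 1) = 0 := by
        rw [← hφp, hφ0]; rfl
      have h3 : ψ (Pi.single j 1) = x j := by
        show (∑ j', (Pi.single j (1 : S) : Fin k → S) j' • x j') = x j
        rw [Finset.sum_eq_single j]
        · rw [Pi.single_eq_same, one_smul]
        · intro j' _ hj'
          rw [Pi.single_eq_of_ne hj', zero_smul]
        · intro h; exact absurd (Finset.mem_univ j) h
      rw [← h3, h2]; rfl
    set g' : Fin k → CharacterModule N₀ := fun j => e (g j) with hg'
    let G : CharacterModule (Fin k → N₀) :=
      { toFun := fun x => ∑ j, g' j (x j)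
        map_zero' := by
          refine Finset.sum_eq_zero fun j _ => ?_
          rw [Pi.zero_apply, map_zero]
        map_add' := fun x y => by
          show (∑ j, g' j ((x + y) j)) = (∑ j, g' j (x j)) + (∑ j, g' j (y j))
          rw [← Finset.sum_add_distrib]
          refine Finset.sum_congr rfl fun j _ => ?_
          rw [Pi.add_apply, map_add] }
    obtain ⟨Fbig, hFbig⟩ := CharacterModule.dual_surjective_of_injective γlin hinj G
    let F : Fin m → CharacterModule N₀ := fun t =>
      (Fbig : (Fin m → N₀) →+ AddCircle (1 : ℚ)).comp (AddMonoidHom.single (fun _ => N₀) t)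
    have hrel : ∀ j, (∑ t, (op (κ t j) • F t)) = g' j := by
      intro j
      refine DFunLike.ext _ _ fun n => ?_
      rw [char_sum_apply]
      have h1 : ∀ t, (op (κ t j) • F t) n = Fbig (Pi.single t (κ t j • n)) := fun t => rfl
      calc (∑ t, (op (κ t j) • F t) n)
          = ∑ t, Fbig (Pi.single t (κ t j • n)) := Finset.sum_congr rfl fun t _ => h1 t
        _ = Fbig (∑ t, Pi.single t (κ t j • n)) := (map_sum Fbig _ _).symm
        _ = Fbig (fun t => κ t j • n) := by rw [Finset.univ_sum_single (fun t => κ t j • n)]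
        _ = Fbig (γlin (Pi.single j n)) := by
            congr 1
            funext t
            rw [hγlin, Finset.sum_eq_single j]
            · rw [Pi.single_eq_same]
            · intro j' _ hj'
              rw [Pi.single_eq_of_ne hj', smul_zero]
            · intro h; exact absurd (Finset.mem_univ j) h
        _ = G (Pi.single j n) := by exact DFunLike.congr_fun hFbig (Pi.single j n)
        _ = g' j n := by
            show (∑ j', g' j' ((Pi.single j n : Fin k → N₀) j')) = g' j n
            rw [Finset.sum_eq_single j]
            · rw [Pi.single_eq_same]
            · intro j' _ hj'
              rw [Pi.single_eq_of_ne hj', map_zero]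
            · intro h; exact absurd (Finset.mem_univ j) h
    have hgF : ∀ j, g j = e.symm (∑ t, (op (κ t j) • F t)) := by
      intro j
      rw [hrel j, hg']
      exact (e.symm_apply_apply (g j)).symm
    calc (∑ j, btmul ℤ S V C (g j) (γ j))
        = ∑ j, btmul ℤ S V C (e.symm (∑ t, (op (κ t j) • F t))) (γ j) :=
          Finset.sum_congr rfl fun j _ => by rw [← hgF j]
      _ = ∑ j, ∑ t, btmul ℤ S V C (op (κ t j) • e.symm (F t)) (γ j) := by
          refine Finset.sum_congr rfl fun j _ => ?_
          rw [map_sum e.symm]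
          have heq : ∀ t, e.symm (op (κ t j) • F t) = op (κ t j) • e.symm (F t) :=
            fun t => e.symm.map_smul _ _
          rw [Finset.sum_congr rfl fun t _ => heq t]
          exact map_sum (btL ℤ S V C (γ j)) _ _
      _ = ∑ t, ∑ j, btmul ℤ S V C (e.symm (F t)) (κ t j • γ j) := by
          rw [Finset.sum_comm]
          exact Finset.sum_congr rfl fun t _ => Finset.sum_congr rfl fun j _ =>
            btmul_rel ℤ S V (κ t j) (e.symm (F t)) (γ j)
      _ = ∑ t, btmul ℤ S V C (e.symm (F t)) (p (κ t)) := by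
          refine Finset.sum_congr rfl fun t _ => ?_
          rw [hpv (κ t)]
          exact (map_sum (btR ℤ S V C (e.symm (F t))) _ _).symm
      _ = 0 := by
          refine Finset.sum_eq_zero fun t _ => ?_
          rw [hκ0 t]
          exact map_zero (btR ℤ S V C (e.symm (F t)))
  -- Step A: every element is zero
  have hall : ∀ q : BTen ℤ S V C, q = 0 := by
    intro q
    obtain ⟨z, rfl⟩ := Submodule.Quotient.mk_surjective _ q
    induction z using TensorProduct.induction_on with
    | zero => rfl
    | tmul v c =>
        obtain ⟨w, rfl⟩ := hp c
        show btmul ℤ S V C v (p w) = 0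
        have hsum : btmul ℤ S V C v (p w) = ∑ j, btmul ℤ S V C v (w j • γ j) := by
          rw [hpv w]
          exact map_sum (btR ℤ S V C v) _ _
        rw [hsum]
        have heq : ∀ j, btmul ℤ S V C v (w j • γ j) = btmul ℤ S V C (op (w j) • v) (γ j) :=
          fun j => (btmul_rel ℤ S V (w j) v (γ j)).symm
        rw [Finset.sum_congr rfl fun j _ => heq j]
        exact hB (fun j => op (w j) • v)
    | add x y hx hy =>
        rw [Submodule.Quotient.mk_add, hx, hy, add_zero]
  exact ⟨fun a b => by rw [hall a, hall b]⟩

end CoreS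

section CoreR

variable (S : Type) [Ring S] (R : Type) [Ring R]
variable (C : Type) [AddCommGroup C] [Module S C] [Module Rᵐᵒᵖ C] [SMulCommClass S Rᵐᵒᵖ C]

/-- The symmetric key step on the `R`-side. -/
lemma coreR
    (hfp : ∃ (k m : ℕ) (p : (Fin k → Rᵐᵒᵖ) →ₗ[Rᵐᵒᵖ] C) (κ : Fin m → (Fin k → Rᵐᵒᵖ)),
      Function.Surjective p ∧ LinearMap.ker p = Submodule.span Rᵐᵒᵖ (Set.range κ))
    (M₀ : Type) [AddCommGroup M₀] [Module Rᵐᵒᵖ M₀]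
    (hHom : ∀ φ : C →ₗ[Rᵐᵒᵖ] M₀, φ = 0) :
    Subsingleton (BTen S R C (CharacterModule M₀)) := by
  obtain ⟨k, m, p, κ, hp, hker⟩ := hfp
  set γ : Fin k → C := fun j => p (Pi.single j 1) with hγ
  have hsingle : ∀ (j : Fin k) (a : Rᵐᵒᵖ),
      (Pi.single j a : Fin k → Rᵐᵒᵖ) = a • (Pi.single j (1 : Rᵐᵒᵖ) : Fin k → Rᵐᵒᵖ) := by
    intro j a
    ext i
    rcases eq_or_ne i j with rfl | h
    · simp
    · simp [Pi.single_apply, h]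
  have hpv : ∀ v : Fin k → Rᵐᵒᵖ, p v = ∑ j, v j • γ j := by
    intro v
    conv_lhs => rw [← Finset.univ_sum_single v, map_sum]
    refine Finset.sum_congr rfl fun j _ => ?_
    rw [hsingle j (v j), map_smul]
  have hκ0 : ∀ t, p (κ t) = 0 := by
    intro t
    have : κ t ∈ LinearMap.ker p := by
      rw [hker]
      exact Submodule.subset_span ⟨t, rfl⟩
    exact this
  set Mc := CharacterModule M₀ with hMc
  -- Step B
  have hB : ∀ g : Fin k → Mc, (∑ j, btmul S R C Mc (γ j) (g j)) = 0 := by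
    intro g
    let γadd : (Fin k → M₀) →+ (Fin m → M₀) :=
      { toFun := fun x t => ∑ j, κ t j • x j
        map_zero' := by funext t; simp
        map_add' := fun x y => by
          funext t
          simp [Pi.add_apply, smul_add, Finset.sum_add_distrib] }
    let γlin : (Fin k → M₀) →ₗ[ℤ] (Fin m → M₀) := γadd.toIntLinearMap
    have hγlin : ∀ (x : Fin k → M₀) (t : Fin m), γlin x t = ∑ j, κ t j • x j :=
      fun x t => rfl
    have hinj : Function.Injective γlin := by
      suffices h : ∀ x, γlin x = 0 → x = 0 by
        intro x y hxy
        have := h (x - y) (by rw [map_sub, hxy, sub_self])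
        rwa [sub_eq_zero] at this
      intro x hx
      let ψ : (Fin k → Rᵐᵒᵖ) →ₗ[Rᵐᵒᵖ] M₀ :=
        { toFun := fun v => ∑ j, v j • x j
          map_add' := fun v w => by simp [Pi.add_apply, add_smul, Finset.sum_add_distrib]
          map_smul' := fun a v => by
            simp [Pi.smul_apply, smul_eq_mul, mul_smul, Finset.smul_sum] }
      have hκψ : ∀ t, ψ (κ t) = 0 := by
        intro t
        have h1 : γlin x t = 0 := by rw [hx]; rfl
        rw [hγlin] at h1
        exact h1
      have hle : LinearMap.ker p ≤ LinearMap.ker ψ := by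
        rw [hker, Submodule.span_le]
        rintro _ ⟨t, rfl⟩
        exact hκψ t
      let eqv := p.quotKerEquivOfSurjective hp
      let φ : C →ₗ[Rᵐᵒᵖ] M₀ := ((LinearMap.ker p).liftQ ψ hle) ∘ₗ (eqv.symm : C →ₗ[Rᵐᵒᵖ] _)
      have hφp : ∀ v, φ (p v) = ψ v := by
        intro v
        have h1 : eqv.symm (p v) = Submodule.Quotient.mk v := by
          apply eqv.injective
          rw [LinearEquiv.apply_symm_apply]
          rfl
        show ((LinearMap.ker p).liftQ ψ hle) (eqv.symm (p v)) = ψ v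
        rw [h1, Submodule.liftQ_apply]
      have hφ0 : φ = 0 := hHom φ
      funext j
      have h2 : ψ (Pi.single j 1) = 0 := by
        rw [← hφp, hφ0]; rfl
      have h3 : ψ (Pi.single j 1) = x j := by
        show (∑ j', (Pi.single j (1 : Rᵐᵒᵖ) : Fin k → Rᵐᵒᵖ) j' • x j') = x j
        rw [Finset.sum_eq_single j]
        · rw [Pi.single_eq_same, one_smul]
        · intro j' _ hj'
          rw [Pi.single_eq_of_ne hj', zero_smul]
        · intro h; exact absurd (Finset.mem_univ j) h
      rw [← h3, h2]; rfl
    let G : CharacterModule (Fin k → M₀) :=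
      { toFun := fun x => ∑ j, g j (x j)
        map_zero' := by
          refine Finset.sum_eq_zero fun j _ => ?_
          rw [Pi.zero_apply, map_zero]
        map_add' := fun x y => by
          show (∑ j, g j ((x + y) j)) = (∑ j, g j (x j)) + (∑ j, g j (y j))
          rw [← Finset.sum_add_distrib]
          refine Finset.sum_congr rfl fun j _ => ?_
          rw [Pi.add_apply, map_add] }
    obtain ⟨Fbig, hFbig⟩ := CharacterModule.dual_surjective_of_injective γlin hinj G
    let F : Fin m → Mc := fun t =>
      (Fbig : (Fin m → M₀) →+ AddCircle (1 : ℚ)).comp (AddMonoidHom.single (fun _ => M₀) t)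
    have hrel : ∀ j, (∑ t, ((κ t j).unop • F t)) = g j := by
      intro j
      refine DFunLike.ext _ _ fun x => ?_
      rw [char_sum_apply]
      have h1 : ∀ t, ((κ t j).unop • F t) x = Fbig (Pi.single t (κ t j • x)) := by
        intro t
        rw [charModLeft_smul_apply, MulOpposite.op_unop]
        rfl
      calc (∑ t, ((κ t j).unop • F t) x)
          = ∑ t, Fbig (Pi.single t (κ t j • x)) := Finset.sum_congr rfl fun t _ => h1 t
        _ = Fbig (∑ t, Pi.single t (κ t j • x)) := (map_sum Fbig _ _).symm
        _ = Fbig (fun t => κ t j • x) := by rw [Finset.univ_sum_single (fun t => κ t j • x)]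
        _ = Fbig (γlin (Pi.single j x)) := by
            congr 1
            funext t
            rw [hγlin, Finset.sum_eq_single j]
            · rw [Pi.single_eq_same]
            · intro j' _ hj'
              rw [Pi.single_eq_of_ne hj', smul_zero]
            · intro h; exact absurd (Finset.mem_univ j) h
        _ = G (Pi.single j x) := by exact DFunLike.congr_fun hFbig (Pi.single j x)
        _ = g j x := by
            show (∑ j', g j' ((Pi.single j x : Fin k → M₀) j')) = g j x
            rw [Finset.sum_eq_single j]
            · rw [Pi.single_eq_same]
            · intro j' _ hj'
              rw [Pi.single_eq_of_ne hj', map_zero]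
            · intro h; exact absurd (Finset.mem_univ j) h
    calc (∑ j, btmul S R C Mc (γ j) (g j))
        = ∑ j, btmul S R C Mc (γ j) (∑ t, ((κ t j).unop • F t)) :=
          Finset.sum_congr rfl fun j _ => by rw [hrel j]
      _ = ∑ j, ∑ t, btmul S R C Mc (γ j) ((κ t j).unop • F t) := by
          refine Finset.sum_congr rfl fun j _ => ?_
          exact map_sum (btR S R C Mc (γ j)) _ _
      _ = ∑ t, ∑ j, btmul S R C Mc (κ t j • γ j) (F t) := by
          rw [Finset.sum_comm]
          refine Finset.sum_congr rfl fun t _ => Finset.sum_congr rfl fun j _ => ?_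
          have := btmul_rel S R C ((κ t j).unop) (γ j) (F t)
          rw [MulOpposite.op_unop] at this
          exact this.symm
      _ = ∑ t, btmul S R C Mc (p (κ t)) (F t) := by
          refine Finset.sum_congr rfl fun t _ => ?_
          rw [hpv (κ t)]
          exact (map_sum (btL S R C Mc (F t)) _ _).symm
      _ = 0 := by
          refine Finset.sum_eq_zero fun t _ => ?_
          rw [hκ0 t]
          exact map_zero (btL S R C Mc (F t))
  -- Step A
  have hall : ∀ q : BTen S R C Mc, q = 0 := by
    intro q
    obtain ⟨z, rfl⟩ := Submodule.Quotient.mk_surjective _ q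
    induction z using TensorProduct.induction_on with
    | zero => rfl
    | tmul c f =>
        obtain ⟨w, rfl⟩ := hp c
        show btmul S R C Mc (p w) f = 0
        have hsum : btmul S R C Mc (p w) f = ∑ j, btmul S R C Mc (w j • γ j) f := by
          rw [hpv w]
          exact map_sum (btL S R C Mc f) _ _
        rw [hsum]
        have heq : ∀ j, btmul S R C Mc (w j • γ j) f
            = btmul S R C Mc (γ j) ((w j).unop • f) := by
          intro j
          have := btmul_rel S R C ((w j).unop) (γ j) f
          rw [MulOpposite.op_unop] at this
          exact this
        rw [Finset.sum_congr rfl fun j _ => heq j]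
        exact hB (fun j => (w j).unop • f)
    | add x y hx hy =>
        rw [Submodule.Quotient.mk_add, hx, hy, add_zero]
  exact ⟨fun a b => by rw [hall a, hall b]⟩

end CoreR

section Backward

universe u1 u2 u3

variable (S : Type) [Ring S] (R : Type) [Ring R]
variable (C : Type) [AddCommGroup C] [Module S C] [Module Rᵐᵒᵖ C] [SMulCommClass S Rᵐᵒᵖ C]

lemma backward1
    (hT1 : ∀ N' : ModuleCat.{u3} Sᵐᵒᵖ, Subsingleton (BTen ℤ S N' C) → Subsingleton N')
    (hfp : ∃ (k m : ℕ) (p : (Fin k → S) →ₗ[S] C) (κ : Fin m → (Fin k → S)),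
      Function.Surjective p ∧ LinearMap.ker p = Submodule.span S (Set.range κ))
    (N : Type u1) [AddCommGroup N] [Module S N]
    (hHom : ∀ φ : C →ₗ[S] N, φ = 0) : Subsingleton N := by
  suffices hz : ∀ a : N, a = 0 by exact ⟨fun a b => by rw [hz a, hz b]⟩
  intro a
  let ρ : S →ₗ[S] N := LinearMap.toSpanSingleton S N a
  let N₀ := S ⧸ LinearMap.ker ρ
  let ι : N₀ →ₗ[S] N := (LinearMap.ker ρ).liftQ ρ le_rfl
  have hι : Function.Injective ι := by
    rw [← LinearMap.ker_eq_bot]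
    exact Submodule.ker_liftQ_eq_bot _ _ _ le_rfl
  have hHom0 : ∀ φ : C →ₗ[S] N₀, φ = 0 := by
    intro φ
    have h := hHom (ι ∘ₗ φ)
    refine LinearMap.ext fun c => hι ?_
    have h4 := DFunLike.congr_fun h c
    rw [LinearMap.comp_apply, LinearMap.zero_apply] at h4
    rw [LinearMap.zero_apply, map_zero]
    exact h4
  have hsubB : Subsingleton (BTen ℤ S (ULift.{u3} (CharacterModule N₀)) C) :=
    coreS S C hfp N₀ hHom0 (ULift.{u3} (CharacterModule N₀)) ULift.moduleEquiv
  have hsubChar : Subsingleton (ULift.{u3} (CharacterModule N₀)) :=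
    hT1 (ModuleCat.of Sᵐᵒᵖ (ULift.{u3} (CharacterModule N₀))) hsubB
  haveI hsubN₀ : Subsingleton N₀ := subsingleton_of_char _ (subsingleton_of_ulift hsubChar)
  have h1 : (Submodule.Quotient.mk (1 : S) : N₀) = 0 := Subsingleton.elim _ _
  have h2 : (1 : S) ∈ LinearMap.ker ρ := (Submodule.Quotient.mk_eq_zero _).1 h1
  have h3 : ρ 1 = 0 := h2
  rwa [show ρ 1 = a from by rw [LinearMap.toSpanSingleton_apply, one_smul]] at h3

lemma backward2
    (hT2 : ∀ M' : ModuleCat R, Subsingleton (BTen S R C M') → Subsingleton M')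
    (hfp : ∃ (k m : ℕ) (p : (Fin k → Rᵐᵒᵖ) →ₗ[Rᵐᵒᵖ] C) (κ : Fin m → (Fin k → Rᵐᵒᵖ)),
      Function.Surjective p ∧ LinearMap.ker p = Submodule.span Rᵐᵒᵖ (Set.range κ))
    (M : Type u2) [AddCommGroup M] [Module Rᵐᵒᵖ M]
    (hHom : ∀ φ : C →ₗ[Rᵐᵒᵖ] M, φ = 0) : Subsingleton M := by
  suffices hz : ∀ a : M, a = 0 by exact ⟨fun a b => by rw [hz a, hz b]⟩
  intro a
  let ρ : Rᵐᵒᵖ →ₗ[Rᵐᵒᵖ] M := LinearMap.toSpanSingleton Rᵐᵒᵖ M a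
  let M₀ := Rᵐᵒᵖ ⧸ LinearMap.ker ρ
  let ι : M₀ →ₗ[Rᵐᵒᵖ] M := (LinearMap.ker ρ).liftQ ρ le_rfl
  have hι : Function.Injective ι := by
    rw [← LinearMap.ker_eq_bot]
    exact Submodule.ker_liftQ_eq_bot _ _ _ le_rfl
  have hHom0 : ∀ φ : C →ₗ[Rᵐᵒᵖ] M₀, φ = 0 := by
    intro φ
    have h := hHom (ι ∘ₗ φ)
    refine LinearMap.ext fun c => hι ?_
    have h4 := DFunLike.congr_fun h c
    rw [LinearMap.comp_apply, LinearMap.zero_apply] at h4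
    rw [LinearMap.zero_apply, map_zero]
    exact h4
  have hsubB : Subsingleton (BTen S R C (CharacterModule M₀)) :=
    coreR S R C hfp M₀ hHom0
  have hsubChar : Subsingleton (CharacterModule M₀) :=
    hT2 (ModuleCat.of R (CharacterModule M₀)) hsubB
  haveI hsubM₀ : Subsingleton M₀ := subsingleton_of_char _ hsubChar
  have h1 : (Submodule.Quotient.mk (1 : Rᵐᵒᵖ) : M₀) = 0 := Subsingleton.elim _ _
  have h2 : (1 : Rᵐᵒᵖ) ∈ LinearMap.ker ρ := (Submodule.Quotient.mk_eq_zero _).1 h1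
  have h3 : ρ 1 = 0 := h2
  rwa [show ρ 1 = a from by rw [LinearMap.toSpanSingleton_apply, one_smul]] at h3

end Backward

/-- a semidualizing bimodule `C` is faithfully semidualizing iff
`- ⊗_S C` and `C ⊗_R -` detect nonzero modules. -/
theorem faithfully_semidualizing_iff_tensor_detects
    (S : Type) [Ring S] (R : Type) [Ring R]
    (C : Type) [AddCommGroup C] [Module S C] [Module Rᵐᵒᵖ C] [SMulCommClass S Rᵐᵒᵖ C]
    (hC : IsSemidualizing S R C) :
    (((∀ N : ModuleCat S, (∀ φ : C →ₗ[S] N, φ = 0) → Subsingleton N) ∧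
      (∀ M : ModuleCat Rᵐᵒᵖ, (∀ φ : C →ₗ[Rᵐᵒᵖ] M, φ = 0) → Subsingleton M)) ↔
     ((∀ N : ModuleCat Sᵐᵒᵖ, Subsingleton (BTen ℤ S (↥N) C) → Subsingleton N) ∧
      (∀ M : ModuleCat R, Subsingleton (BTen S R C (↥M)) → Subsingleton M))) := by
  obtain ⟨hfpS, hfpR, -⟩ := hC
  constructor
  · rintro ⟨h1, h2⟩
    exact ⟨fun N hsub => forward1 S C h1 (↥N) hsub,
           fun M hsub => forward2 S R C h2 (↥M) hsub⟩
  · rintro ⟨hT1, hT2⟩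
    exact ⟨fun N hHom => backward1 S C hT1 (exists_fp S C hfpS) (↥N) hHom,
           fun M hHom => backward2 S R C hT2 (exists_fp Rᵐᵒᵖ C hfpR) (↥M) hHom⟩
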